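/- arXiv:1908.09592 — 4 statements merged into one kernel-verified Lean document; each statement's English description precedes it below -/
import Mathlib

section
/- Let H be an infinite-dimensional separable complex Hilbert space with orthonormal basis (e_k)_{k≥1}, A a bounded linear operator on H, f : ℕ → ℕ with f(n) ≥ n for all n, and z ∈ ℂ. Then |γ̃_n(z, A) − min{σ₁((A − zI)|_{P_nH}), σ₁((A* − z̄I)|_{P_nH})}| ≤ D_{f,n}(A), where γ̃_n(z, A) := min{σ₁(P_{f(n)}(A − zI)|_{P_nH}), σ₁(P_{f(n)}(A* − z̄I)|_{P_nH})}. -/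
/-- The injection modulus of `T` restricted to a subspace `V`:
`σ₁(T|_V) = inf {‖Tx‖ : x ∈ V, ‖x‖ = 1}`. -/
noncomputable def injModOn {H : Type*} [NormedAddCommGroup H] [InnerProductSpace ℂ H]
    (T : H →L[ℂ] H) (V : Submodule ℂ H) : ℝ :=
  sInf ((fun x => ‖T x‖) '' {x : H | x ∈ V ∧ ‖x‖ = 1})

/-- The span `P_nH` of the first `n` basis vectors. -/
noncomputable def spanFin {H : Type*} [NormedAddCommGroup H] [InnerProductSpace ℂ H]
    (e : ℕ → H) (n : ℕ) : Submodule ℂ H :=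
  Submodule.span ℂ (Set.range fun i : Fin n => e (i : ℕ))

/-- The orthogonal projection `P_n` of `H` onto the span of the first `n` basis vectors,
as a continuous linear operator `H →L[ℂ] H`. -/
noncomputable def projCLM {H : Type*} [NormedAddCommGroup H] [InnerProductSpace ℂ H]
    [CompleteSpace H] (e : ℕ → H) (n : ℕ) : H →L[ℂ] H :=
  haveI : FiniteDimensional ℂ (spanFin e n) :=
    FiniteDimensional.span_of_finite ℂ (Set.finite_range _)
  (spanFin e n).subtypeL.comp ((spanFin e n).orthogonalProjectionOnto)

/-- The dispersion `D_{f,n}(A) = max {‖(I - P_{f(n)}) A P_n‖, ‖(I - P_{f(n)}) A* P_n‖}`. -/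
noncomputable def dispersion {H : Type*} [NormedAddCommGroup H] [InnerProductSpace ℂ H]
    [CompleteSpace H] (e : ℕ → H) (f : ℕ → ℕ) (A : H →L[ℂ] H) (n : ℕ) : ℝ :=
  max ‖((1 : H →L[ℂ] H) - projCLM e (f n)).comp (A.comp (projCLM e n))‖
    ‖((1 : H →L[ℂ] H) - projCLM e (f n)).comp ((ContinuousLinearMap.adjoint A).comp (projCLM e n))‖

/-! On `P_nH ⊆ P_{f(n)}H` the vectors `P_{f(n)}(A - z)x` and `(A - z)x` differ by
`(I - P_{f(n)}) A P_n x`, so on unit vectors their norms differ by at most `D_{f,n}(A)`.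
Infima over a common index set and minima of pairs move by at most the pointwise perturbation. -/

open ContinuousLinearMap

lemma csInf_image_le_csInf_image_add {α : Type*} {S : Set α} (hS : S.Nonempty) {f g : α → ℝ}
    (hf : BddBelow (f '' S)) {C : ℝ} (h : ∀ x ∈ S, f x ≤ g x + C) :
    sInf (f '' S) ≤ sInf (g '' S) + C := by
  rw [← sub_le_iff_le_add]
  refine le_csInf (hS.image g) ?_
  rintro _ ⟨x, hx, rfl⟩
  linarith [csInf_le hf (Set.mem_image_of_mem f hx), h x hx]

lemma abs_csInf_image_sub_csInf_image_le {α : Type*} {S : Set α} {f g : α → ℝ} {C : ℝ}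
    (hC : 0 ≤ C) (hf : ∀ x ∈ S, 0 ≤ f x) (hg : ∀ x ∈ S, 0 ≤ g x)
    (hfg : ∀ x ∈ S, |f x - g x| ≤ C) :
    |sInf (f '' S) - sInf (g '' S)| ≤ C := by
  rcases S.eq_empty_or_nonempty with rfl | hS
  · simpa using hC
  have bdd {u : α → ℝ} (hu : ∀ x ∈ S, 0 ≤ u x) : BddBelow (u '' S) :=
    ⟨0, by rintro _ ⟨x, hx, rfl⟩; exact hu x hx⟩
  have hfg' x (hx : x ∈ S) := abs_sub_le_iff.mp (hfg x hx)
  rw [abs_sub_le_iff]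
  constructor
  · linarith [csInf_image_le_csInf_image_add hS (bdd hf) (g := g) (C := C)
      fun x hx => by linarith [(hfg' x hx).1]]
  · linarith [csInf_image_le_csInf_image_add hS (bdd hg) (g := f) (C := C)
      fun x hx => by linarith [(hfg' x hx).2]]

section

variable {H : Type*} [NormedAddCommGroup H] [InnerProductSpace ℂ H]

lemma abs_injModOn_sub_injModOn_le {S T : H →L[ℂ] H} {V : Submodule ℂ H} {C : ℝ} (hC : 0 ≤ C)
    (h : ∀ x ∈ V, ‖x‖ = 1 → ‖S x - T x‖ ≤ C) :
    |injModOn S V - injModOn T V| ≤ C :=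
  abs_csInf_image_sub_csInf_image_le hC (fun _ _ => norm_nonneg _) (fun _ _ => norm_nonneg _)
    fun x ⟨hxV, hx⟩ => (abs_norm_sub_norm_le _ _).trans (h x hxV hx)

lemma spanFin_mono (e : ℕ → H) {m k : ℕ} (h : m ≤ k) : spanFin e m ≤ spanFin e k :=
  Submodule.span_mono <| by
    rintro _ ⟨i, rfl⟩
    exact ⟨⟨i, i.2.trans_le h⟩, rfl⟩

variable [CompleteSpace H]

lemma projCLM_apply_of_mem (e : ℕ → H) {m : ℕ} {x : H} (hx : x ∈ spanFin e m) :
    projCLM e m x = x := by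
  have : FiniteDimensional ℂ (spanFin e m) :=
    FiniteDimensional.span_of_finite ℂ (Set.finite_range _)
  exact (spanFin e m).starProjection_eq_self_iff.mpr hx

lemma norm_projCLM_sub_apply_le (e : ℕ → H) (B : H →L[ℂ] H) (w : ℂ) {n m : ℕ} (hnm : n ≤ m)
    {x : H} (hx : x ∈ spanFin e n) :
    ‖projCLM e m ((B - w • 1) x) - (B - w • 1) x‖ ≤
      ‖(1 - projCLM e m).comp (B.comp (projCLM e n))‖ * ‖x‖ := by
  have hPm : projCLM e m x = x := projCLM_apply_of_mem e (spanFin_mono e hnm hx)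
  have hPn : projCLM e n x = x := projCLM_apply_of_mem e hx
  calc ‖projCLM e m ((B - w • 1) x) - (B - w • 1) x‖
      = ‖(1 - projCLM e m).comp (B.comp (projCLM e n)) x‖ := by
        rw [← norm_neg]
        simp [hPn, hPm]
    _ ≤ _ := le_opNorm _ _

lemma abs_injModOn_projCLM_comp_sub_le (e : ℕ → H) (B : H →L[ℂ] H) (w : ℂ) {n m : ℕ}
    (hnm : n ≤ m) :
    |injModOn ((projCLM e m).comp (B - w • 1)) (spanFin e n) - injModOn (B - w • 1) (spanFin e n)|
      ≤ ‖(1 - projCLM e m).comp (B.comp (projCLM e n))‖ :=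
  abs_injModOn_sub_injModOn_le (norm_nonneg _) fun x hxV hx => by
    simpa [hx] using norm_projCLM_sub_apply_le e B w hnm hxV

end

theorem gammaTilde_approx_general
    {H : Type*} [NormedAddCommGroup H] [InnerProductSpace ℂ H] [CompleteSpace H]
    (e : ℕ → H)
    (A : H →L[ℂ] H) (f : ℕ → ℕ) (hf : ∀ n, n ≤ f n) (n : ℕ) (z : ℂ) :
    |min (injModOn ((projCLM e (f n)).comp (A - z • (1 : H →L[ℂ] H))) (spanFin e n))
        (injModOn ((projCLM e (f n)).comp
          (ContinuousLinearMap.adjoint A - (starRingEnd ℂ) z • (1 : H →L[ℂ] H))) (spanFin e n)) -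
      min (injModOn (A - z • (1 : H →L[ℂ] H)) (spanFin e n))
        (injModOn (ContinuousLinearMap.adjoint A - (starRingEnd ℂ) z • (1 : H →L[ℂ] H))
          (spanFin e n))| ≤ dispersion e f A n :=
  (abs_min_sub_min_le_max _ _ _ _).trans <|
    max_le_max (abs_injModOn_projCLM_comp_sub_le e A z (hf n))
      (abs_injModOn_projCLM_comp_sub_le e (adjoint A) (starRingEnd ℂ z) (hf n))

/-- `|γ̃_n(z, A) - min{σ₁((A - zI)|_{P_nH}), σ₁((A* - z̄I)|_{P_nH})}| ≤ D_{f,n}(A)`,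
where `γ̃_n(z, A) = min{σ₁(P_{f(n)}(A - zI)|_{P_nH}), σ₁(P_{f(n)}(A* - z̄I)|_{P_nH})}`. -/
theorem gammaTilde_approx
    {H : Type*} [NormedAddCommGroup H] [InnerProductSpace ℂ H] [CompleteSpace H]
    (e : ℕ → H) (he : Orthonormal ℂ e)
    (hdense : (Submodule.span ℂ (Set.range e)).topologicalClosure = ⊤)
    (A : H →L[ℂ] H) (f : ℕ → ℕ) (hf : ∀ n, n ≤ f n) (n : ℕ) (z : ℂ) :
    |min (injModOn ((projCLM e (f n)).comp (A - z • (1 : H →L[ℂ] H))) (spanFin e n))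
        (injModOn ((projCLM e (f n)).comp
          (ContinuousLinearMap.adjoint A - (starRingEnd ℂ) z • (1 : H →L[ℂ] H))) (spanFin e n)) -
      min (injModOn (A - z • (1 : H →L[ℂ] H)) (spanFin e n))
        (injModOn (ContinuousLinearMap.adjoint A - (starRingEnd ℂ) z • (1 : H →L[ℂ] H))
          (spanFin e n))| ≤ dispersion e f A n :=
  gammaTilde_approx_general e A f hf n z
end

section
/- Let H be an infinite-dimensional separable complex Hilbert space with orthonormal basis (e_k)_{k≥1}, T a bounded linear operator on H, z ∈ ℂ, n ≥ 1 an integer, and ε ≥ 0. Define the n×n Gram matrices W(z)_{ij} := ⟨(T − zI)e_j, (T − zI)e_i⟩ and V(z)_{ij} := ⟨(T* − z̄I)e_j, (T* − z̄I)e_i⟩ for 1 ≤ i, j ≤ n, and set Ψ_n(z, T) := min{σ₁((T − zI)|_{P_nH}), σ₁((T* − z̄I)|_{P_nH})}. If W̃ and Ṽ are Hermitian n×n complex matrices whose entries satisfy |W̃_{ij} − W(z)_{ij}| ≤ ε and |Ṽ_{ij} − V(z)_{ij}| ≤ ε for all i, j, then |Ψ_n(z, T)² − min{σ₁(W̃),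 σ₁(Ṽ)}| ≤ nε, where for an n×n matrix M, σ₁(M) := min{‖Mx‖ : x ∈ ℂⁿ, ‖x‖ = 1}. -/
/-- The injection modulus `σ₁(M) = min {‖Mx‖ : x ∈ ℂⁿ, ‖x‖ = 1}` of an `n × n` matrix. -/
noncomputable def matInjMod {n : ℕ} (M : Matrix (Fin n) (Fin n) ℂ) : ℝ :=
  sInf ((fun x : EuclideanSpace ℂ (Fin n) => ‖Matrix.toEuclideanLin M x‖) ''
    {x : EuclideanSpace ℂ (Fin n) | ‖x‖ = 1})

/-!
Writing `x = ∑ᵢ c̄ᵢ eᵢ`, the quadratic form of the matrix `W(z)` at `c` is `‖(T - z)x‖²`, so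
`W(z)` is positive semidefinite and `σ₁((T - z)|_{P_nH})² = min_{‖c‖=1} ⟨W(z)c, c⟩`. For a
positive semidefinite matrix this minimum is its smallest eigenvalue, which is also
`min_{‖c‖=1} ‖W(z)c‖ = σ₁(W(z))`: a unit eigenvector attains it, and Cauchy–Schwarz gives
`⟨W c, c⟩ ≤ ‖W c‖`. Hence `Ψ_n(z, T)² = min {σ₁(W(z)), σ₁(V(z))}`, and `σ₁` is `1`-Lipschitz
for the operator norm, which an entrywise `ε`-perturbation of an `n × n` matrix changes by at
most `nε`.
-/

open Set Finset Matrix RCLike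
open scoped ComplexOrder

section InfimumOfImage

variable {α : Type*} {s : Set α} {f g : α → ℝ}

theorem sInf_image_le_sInf_image_add {δ : ℝ} (hf : BddBelow (f '' s)) (hs : s.Nonempty)
    (h : ∀ x ∈ s, f x ≤ g x + δ) :
    sInf (f '' s) ≤ sInf (g '' s) + δ :=
  sub_le_iff_le_add.mp <| le_csInf (hs.image g) <| by
    rintro _ ⟨x, hx, rfl⟩
    linarith [csInf_le hf (mem_image_of_mem f hx), h x hx]

theorem abs_sInf_image_sub_sInf_image_le {δ : ℝ} (hf : BddBelow (f '' s))
    (hg : BddBelow (g '' s)) (hδ : 0 ≤ δ) (h : ∀ x ∈ s, |f x - g x| ≤ δ) :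
    |sInf (f '' s) - sInf (g '' s)| ≤ δ := by
  rcases s.eq_empty_or_nonempty with rfl | hs
  · simpa using hδ
  rw [abs_sub_le_iff, sub_le_iff_le_add', sub_le_iff_le_add']
  exact ⟨sInf_image_le_sInf_image_add hf hs fun x hx => by linarith [abs_le.mp (h x hx)],
    sInf_image_le_sInf_image_add hg hs fun x hx => by linarith [abs_le.mp (h x hx)]⟩

theorem sInf_image_sq (hf : ∀ x, 0 ≤ f x) :
    sInf ((fun x => f x ^ 2) '' s) = sInf (f '' s) ^ 2 := by
  rcases s.eq_empty_or_nonempty with rfl | hs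
  · simp
  have hmono : MonotoneOn (fun y : ℝ => y ^ 2) (f '' s) := by
    rintro _ ⟨x, -, rfl⟩ _ ⟨y, -, rfl⟩ hxy
    exact pow_le_pow_left₀ (hf x) hxy 2
  rw [hmono.map_csInf_of_continuousWithinAt (continuous_pow 2).continuousWithinAt (hs.image f)
    ⟨0, by rintro _ ⟨x, -, rfl⟩; exact hf x⟩, image_image]

end InfimumOfImage

theorem Matrix.norm_toEuclideanLin_apply_le {𝕜 n : Type*} [RCLike 𝕜] [Fintype n]
    [DecidableEq n] {Δ : Matrix n n 𝕜} {ε : ℝ} (hε : 0 ≤ ε) (hΔ : ∀ i j, ‖Δ i j‖ ≤ ε)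
    (x : EuclideanSpace 𝕜 n) :
    ‖Δ.toEuclideanLin x‖ ≤ Fintype.card n * ε * ‖x‖ := by
  have hrow : ∀ i, ‖Δ.toEuclideanLin x i‖ ^ 2 ≤ Fintype.card n * ε ^ 2 * ‖x‖ ^ 2 := fun i =>
    calc ‖Δ.toEuclideanLin x i‖ ^ 2 = ‖∑ j, Δ i j * x j‖ ^ 2 := rfl
      _ ≤ (∑ j, ‖Δ i j‖ * ‖x j‖) ^ 2 := by
        gcongr
        exact (norm_sum_le _ _).trans_eq (by simp_rw [norm_mul])
      _ ≤ (∑ j, ‖Δ i j‖ ^ 2) * ∑ j, ‖x j‖ ^ 2 := sum_mul_sq_le_sq_mul_sq _ _ _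
      _ ≤ (∑ _j : n, ε ^ 2) * ‖x‖ ^ 2 := by
        rw [EuclideanSpace.norm_sq_eq]
        gcongr with j
        exact hΔ i j
      _ = Fintype.card n * ε ^ 2 * ‖x‖ ^ 2 := by simp
  refine (pow_le_pow_iff_left₀ (norm_nonneg _) (by positivity) two_ne_zero).mp ?_
  calc ‖Δ.toEuclideanLin x‖ ^ 2 = ∑ i, ‖Δ.toEuclideanLin x i‖ ^ 2 := EuclideanSpace.norm_sq_eq _
    _ ≤ ∑ _i : n, Fintype.card n * ε ^ 2 * ‖x‖ ^ 2 := sum_le_sum fun i _ => hrow i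
    _ = (Fintype.card n * ε * ‖x‖) ^ 2 := by
      simp only [sum_const, card_univ, nsmul_eq_mul]
      ring

theorem abs_matInjMod_sub_le {n : ℕ} {M N : Matrix (Fin n) (Fin n) ℂ} {ε : ℝ} (hε : 0 ≤ ε)
    (h : ∀ i j, ‖M i j - N i j‖ ≤ ε) :
    |matInjMod M - matInjMod N| ≤ n * ε := by
  refine abs_sInf_image_sub_sInf_image_le ⟨0, by rintro _ ⟨x, -, rfl⟩; exact norm_nonneg _⟩
    ⟨0, by rintro _ ⟨x, -, rfl⟩; exact norm_nonneg _⟩ (by positivity) fun x hx => ?_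
  calc |‖M.toEuclideanLin x‖ - ‖N.toEuclideanLin x‖|
      ≤ ‖(M - N).toEuclideanLin x‖ := by
        rw [map_sub, LinearMap.sub_apply]
        exact abs_norm_sub_norm_le _ _
    _ ≤ n * ε * ‖x‖ := by
        simpa using norm_toEuclideanLin_apply_le (Δ := M - N) hε h x
    _ = n * ε := by rw [hx.out, mul_one]

theorem LinearMap.IsPositive.sInf_norm_apply_eq_sInf_re_inner {𝕜 E : Type*} [RCLike 𝕜]
    [NormedAddCommGroup E] [InnerProductSpace 𝕜 E] [FiniteDimensional 𝕜 E]
    {T : E →ₗ[𝕜] E} (hT : T.IsPositive) :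
    sInf ((fun x => ‖T x‖) '' {x | ‖x‖ = 1}) =
      sInf ((fun x => re (inner 𝕜 (T x) x)) '' {x | ‖x‖ = 1}) := by
  rcases subsingleton_or_nontrivial E with hE | hE
  · have : {x : E | ‖x‖ = 1} = ∅ := by ext x; simp [Subsingleton.elim x 0]
    simp [this]
  set μ := ⨅ x : {x : E // x ≠ 0}, re (inner 𝕜 (T x) x) / ‖(x : E)‖ ^ 2
  have hμ_le : ∀ x : E, ‖x‖ = 1 → μ ≤ re (inner 𝕜 (T x) x) := fun x hx => by
    have hbdd : BddBelow (Set.range fun x : {x : E // x ≠ 0} =>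
        re (inner 𝕜 (T x) x) / ‖(x : E)‖ ^ 2) :=
      ⟨0, by rintro _ ⟨y, rfl⟩; exact div_nonneg (hT.re_inner_nonneg_left y) (sq_nonneg _)⟩
    simpa [hx] using ciInf_le hbdd ⟨x, norm_ne_zero_iff.mp (by simp [hx])⟩
  obtain ⟨v, hv⟩ := hT.isSymmetric.hasEigenvalue_iInf_of_finiteDimensional.exists_hasEigenvector
  set u := (‖v‖⁻¹ : 𝕜) • v
  have hu : ‖u‖ = 1 := by simp [u, norm_smul, hv.2]
  have hTu : T u = (μ : 𝕜) • u := by rw [map_smul, hv.apply_eq_smul, smul_comm]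
  have hμ : re (inner 𝕜 (T u) u) = μ := by simp [hTu, inner_smul_left, hu]
  have hμ_nonneg : 0 ≤ μ := hμ ▸ hT.re_inner_nonneg_left u
  have hnorm : IsLeast ((fun x => ‖T x‖) '' {x | ‖x‖ = 1}) μ := by
    refine ⟨⟨u, hu, by simp [hTu, norm_smul, hu, abs_of_nonneg hμ_nonneg]⟩, ?_⟩
    rintro _ ⟨x, hx, rfl⟩
    calc μ ≤ re (inner 𝕜 (T x) x) := hμ_le x hx
      _ ≤ ‖inner 𝕜 (T x) x‖ := re_le_norm _
      _ ≤ ‖T x‖ * ‖x‖ := norm_inner_le_norm _ _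
      _ = ‖T x‖ := by rw [hx.out, mul_one]
  have hre : IsLeast ((fun x => re (inner 𝕜 (T x) x)) '' {x | ‖x‖ = 1}) μ :=
    ⟨⟨u, hu, hμ⟩, by rintro _ ⟨x, hx, rfl⟩; exact hμ_le x hx⟩
  rw [hnorm.csInf_eq, hre.csInf_eq]

theorem Matrix.re_inner_toEuclideanLin_transpose_gram {𝕜 ι E : Type*} [RCLike 𝕜] [Fintype ι]
    [DecidableEq ι] [NormedAddCommGroup E] [InnerProductSpace 𝕜 E] (v : ι → E)
    (c : EuclideanSpace 𝕜 ι) :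
    re (inner 𝕜 ((gram 𝕜 v)ᵀ.toEuclideanLin c) c) = ‖∑ i, star (c i) • v i‖ ^ 2 := by
  have h : inner 𝕜 c ((gram 𝕜 v)ᵀ.toEuclideanLin c) =
      inner 𝕜 (∑ i, star (c i) • v i) (∑ i, star (c i) • v i) := by
    rw [← star_dotProduct_gram_mulVec]
    change (gram 𝕜 v)ᵀ *ᵥ c.ofLp ⬝ᵥ star c.ofLp = star (star c.ofLp) ⬝ᵥ _ *ᵥ star c.ofLp
    rw [star_star, dotProduct_comm, dotProduct_mulVec, vecMul_transpose, dotProduct_comm]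
  rw [inner_re_symm, h, inner_self_eq_norm_sq_to_K]
  norm_cast

section Orthonormal

variable {𝕜 ι E : Type*} [RCLike 𝕜] [Fintype ι] [NormedAddCommGroup E] [InnerProductSpace 𝕜 E]
  {v : ι → E}

theorem Orthonormal.norm_sum_star_smul (hv : Orthonormal 𝕜 v) (c : EuclideanSpace 𝕜 ι) :
    ‖∑ i, star (c i) • v i‖ = ‖c‖ := by
  have h : (‖∑ i, star (c i) • v i‖ ^ 2 : 𝕜) = (‖c‖ ^ 2 : ℝ) := by
    rw [← inner_self_eq_norm_sq_to_K, hv.inner_sum, EuclideanSpace.norm_sq_eq]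
    push_cast
    simp [RCLike.mul_conj]
  exact (pow_left_inj₀ (norm_nonneg _) (norm_nonneg _) two_ne_zero).mp (mod_cast h)

theorem Orthonormal.image_sum_star_smul_unit (hv : Orthonormal 𝕜 v) :
    (fun c : EuclideanSpace 𝕜 ι => ∑ i, star (c i) • v i) '' {c | ‖c‖ = 1} =
      {x | x ∈ Submodule.span 𝕜 (Set.range v) ∧ ‖x‖ = 1} := by
  ext x
  constructor
  · rintro ⟨c, hc, rfl⟩
    exact ⟨Submodule.mem_span_range_iff_exists_fun 𝕜 |>.mpr ⟨_, rfl⟩,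
      (hv.norm_sum_star_smul c).trans hc⟩
  · rintro ⟨hx, hx1⟩
    obtain ⟨d, rfl⟩ := Submodule.mem_span_range_iff_exists_fun 𝕜 |>.mp hx
    refine ⟨WithLp.toLp 2 (star d), ?_, by simp⟩
    show ‖_‖ = 1
    rw [← hx1, ← hv.norm_sum_star_smul]
    simp

end Orthonormal

theorem injModOn_spanFin_sq {H : Type*} [NormedAddCommGroup H] [InnerProductSpace ℂ H]
    {e : ℕ → H} (he : Orthonormal ℂ e) (A : H →L[ℂ] H) (n : ℕ) :
    injModOn A (spanFin e n) ^ 2 = matInjMod (gram ℂ fun i : Fin n => A (e i))ᵀ := by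
  have hv : Orthonormal ℂ fun i : Fin n => e i := he.comp _ Fin.val_injective
  have hpos : (gram ℂ fun i : Fin n => A (e i))ᵀ.toEuclideanLin.IsPositive :=
    isPositive_toEuclideanLin_iff.mpr (posSemidef_transpose_iff.mpr (posSemidef_gram ℂ _))
  calc injModOn A (spanFin e n) ^ 2
      = sInf ((fun c : EuclideanSpace ℂ (Fin n) => ‖A (∑ i, star (c i) • e i)‖ ^ 2) ''
          {c | ‖c‖ = 1}) := by
        rw [injModOn, spanFin, ← hv.image_sum_star_smul_unit, Set.image_image,
          sInf_image_sq fun _ => norm_nonneg _]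
    _ = sInf ((fun c => re (inner ℂ ((gram ℂ fun i : Fin n => A (e i))ᵀ.toEuclideanLin c) c)) ''
          {c | ‖c‖ = 1}) := by
        simp_rw [re_inner_toEuclideanLin_transpose_gram, map_sum, map_smul]
    _ = matInjMod (gram ℂ fun i : Fin n => A (e i))ᵀ :=
        hpos.sInf_norm_apply_eq_sInf_re_inner.symm

theorem psi_sq_approx_by_gram_general
    {H : Type*} [NormedAddCommGroup H] [InnerProductSpace ℂ H] [CompleteSpace H]
    (e : ℕ → H) (he : Orthonormal ℂ e)
    (T : H →L[ℂ] H) (z : ℂ) (n : ℕ) (ε : ℝ) (hε : 0 ≤ ε)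
    (Wt Vt : Matrix (Fin n) (Fin n) ℂ)
    (hW : ∀ i j : Fin n, ‖Wt i j -
      (inner ℂ ((T - z • (1 : H →L[ℂ] H)) (e (j : ℕ)))
        ((T - z • (1 : H →L[ℂ] H)) (e (i : ℕ))) : ℂ)‖ ≤ ε)
    (hV : ∀ i j : Fin n, ‖Vt i j -
      (inner ℂ ((ContinuousLinearMap.adjoint T - (starRingEnd ℂ) z • (1 : H →L[ℂ] H)) (e (j : ℕ)))
        ((ContinuousLinearMap.adjoint T - (starRingEnd ℂ) z • (1 : H →L[ℂ] H)) (e (i : ℕ))) : ℂ)‖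
        ≤ ε) :
    |(min (injModOn (T - z • (1 : H →L[ℂ] H)) (spanFin e n))
        (injModOn (ContinuousLinearMap.adjoint T - (starRingEnd ℂ) z • (1 : H →L[ℂ] H))
          (spanFin e n))) ^ 2 -
      min (matInjMod Wt) (matInjMod Vt)| ≤ (n : ℝ) * ε := by
  set A := T - z • (1 : H →L[ℂ] H)
  set B := ContinuousLinearMap.adjoint T - (starRingEnd ℂ) z • (1 : H →L[ℂ] H)
  have hA : |matInjMod Wt - injModOn A (spanFin e n) ^ 2| ≤ n * ε := by
    rw [injModOn_spanFin_sq he]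
    exact abs_matInjMod_sub_le hε hW
  have hB : |matInjMod Vt - injModOn B (spanFin e n) ^ 2| ≤ n * ε := by
    rw [injModOn_spanFin_sq he]
    exact abs_matInjMod_sub_le hε hV
  have hsq_min : ∀ a b : ℝ, 0 ≤ a → 0 ≤ b → min a b ^ 2 = min (a ^ 2) (b ^ 2) := by
    intro a b ha hb
    rcases le_total a b with h | h
    · rw [min_eq_left h, min_eq_left (pow_le_pow_left₀ ha h 2)]
    · rw [min_eq_right h, min_eq_right (pow_le_pow_left₀ hb h 2)]
  have hnonneg : ∀ C : H →L[ℂ] H, 0 ≤ injModOn C (spanFin e n) := fun C =>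
    Real.sInf_nonneg (by rintro _ ⟨x, -, rfl⟩; exact norm_nonneg _)
  rw [hsq_min _ _ (hnonneg A) (hnonneg B), abs_sub_comm]
  exact (abs_min_sub_min_le_max _ _ _ _).trans (max_le hA hB)

/-- If the Hermitian matrices `W̃, Ṽ` approximate the Gram matrices
`W(z)_{ij} = ⟨(T - zI)e_j, (T - zI)e_i⟩` and `V(z)_{ij} = ⟨(T* - z̄I)e_j, (T* - z̄I)e_i⟩`
entrywise up to `ε`, then `|Ψ_n(z, T)² - min{σ₁(W̃), σ₁(Ṽ)}| ≤ nε`, where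
`Ψ_n(z, T) = min{σ₁((T - zI)|_{P_nH}), σ₁((T* - z̄I)|_{P_nH})}`. -/
theorem psi_sq_approx_by_gram
    {H : Type*} [NormedAddCommGroup H] [InnerProductSpace ℂ H] [CompleteSpace H]
    (e : ℕ → H) (he : Orthonormal ℂ e)
    (hdense : (Submodule.span ℂ (Set.range e)).topologicalClosure = ⊤)
    (T : H →L[ℂ] H) (z : ℂ) (n : ℕ) (hn : 1 ≤ n) (ε : ℝ) (hε : 0 ≤ ε)
    (Wt Vt : Matrix (Fin n) (Fin n) ℂ) (hWherm : Wt.IsHermitian) (hVherm : Vt.IsHermitian)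
    (hW : ∀ i j : Fin n, ‖Wt i j -
      (inner ℂ ((T - z • (1 : H →L[ℂ] H)) (e (j : ℕ)))
        ((T - z • (1 : H →L[ℂ] H)) (e (i : ℕ))) : ℂ)‖ ≤ ε)
    (hV : ∀ i j : Fin n, ‖Vt i j -
      (inner ℂ ((ContinuousLinearMap.adjoint T - (starRingEnd ℂ) z • (1 : H →L[ℂ] H)) (e (j : ℕ)))
        ((ContinuousLinearMap.adjoint T - (starRingEnd ℂ) z • (1 : H →L[ℂ] H)) (e (i : ℕ))) : ℂ)‖
        ≤ ε) :
    |(min (injModOn (T - z • (1 : H →L[ℂ] H)) (spanFin e n))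
        (injModOn (ContinuousLinearMap.adjoint T - (starRingEnd ℂ) z • (1 : H →L[ℂ] H))
          (spanFin e n))) ^ 2 -
      min (matInjMod Wt) (matInjMod Vt)| ≤ (n : ℝ) * ε :=
  psi_sq_approx_by_gram_general e he T z n ε hε Wt Vt hW hV
end

section
/- Let H be an infinite-dimensional separable complex Hilbert space with orthonormal basis (e_k)_{k≥1}, and let B be a bounded self-adjoint operator on H. For j ≥ 1 and n ≥ j, the min-max values satisfy: (i) λ_j(B) ≤ μ_j^{n+1}(B) ≤ μ_j^n(B); and (ii) lim_{n→∞} μ_j^n(B) = λ_j(B). -/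
open Filter Topology

/-- `sup {⟨Bx, x⟩ : x ∈ V, ‖x‖ = 1}`, the Rayleigh supremum of `B` over `V`. -/
noncomputable def rayleighSup {H : Type*} [NormedAddCommGroup H] [InnerProductSpace ℂ H]
    (B : H →L[ℂ] H) (V : Submodule ℂ H) : ℝ :=
  sSup ((fun x => (inner ℂ (B x) x : ℂ).re) '' {x : H | x ∈ V ∧ ‖x‖ = 1})

/-- The `j`-th min-max value `λ_j(B)`, the infimum over `j`-dimensional subspaces `V ⊆ H`
of the Rayleigh supremum. -/
noncomputable def minMaxVal {H : Type*} [NormedAddCommGroup H] [InnerProductSpace ℂ H]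
    (B : H →L[ℂ] H) (j : ℕ) : ℝ :=
  sInf {t : ℝ | ∃ V : Submodule ℂ H, Module.finrank ℂ V = j ∧ t = rayleighSup B V}

/-- The finite-section min-max value `μ_j^n(B)`, the infimum over `j`-dimensional
subspaces `V ⊆ P_nH` of the Rayleigh supremum. -/
noncomputable def minMaxValFS {H : Type*} [NormedAddCommGroup H] [InnerProductSpace ℂ H]
    (e : ℕ → H) (B : H →L[ℂ] H) (j n : ℕ) : ℝ :=
  sInf {t : ℝ | ∃ V : Submodule ℂ H, V ≤ spanFin e n ∧ Module.finrank ℂ V = j ∧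
    t = rayleighSup B V}

/-! Monotonicity in `n` holds because the admissible subspaces only grow with `n`, and all of
them are admissible for `λ_j`. For convergence, take a `j`-dimensional `V` whose Rayleigh
supremum is close to `λ_j`. Moving an orthonormal basis of `V` slightly into the dense span of
the `e k` gives a `j`-dimensional subspace of some `P_N H` whose unit vectors lie uniformly close
to `V`; since `x ↦ re ⟪B x, x⟫` is Lipschitz on bounded sets, its Rayleigh supremum exceeds that
of `V` only slightly. -/

section Perturbation

variable {𝕜 E : Type*} [RCLike 𝕜] [NormedAddCommGroup E] [InnerProductSpace 𝕜 E]
  {ι : Type*} [Fintype ι]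

lemma Orthonormal.norm_sum_smul_sub_le {v u : ι → E} (hv : Orthonormal 𝕜 v) {δ : ℝ}
    (hu : ∀ i, ‖u i - v i‖ ≤ δ) (c : ι → 𝕜) :
    ‖∑ i, c i • u i - ∑ i, c i • v i‖ ≤ Fintype.card ι * δ * ‖∑ i, c i • v i‖ := by
  set x := ∑ i, c i • v i
  have hc : ∀ i, ‖c i‖ ≤ ‖x‖ := fun i => by
    simpa [← hv.inner_right_fintype c i, hv.1 i] using norm_inner_le_norm (𝕜 := 𝕜) (v i) x
  calc ‖∑ i, c i • u i - x‖ = ‖∑ i, c i • (u i - v i)‖ := by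
        simp only [x, smul_sub, Finset.sum_sub_distrib]
    _ ≤ ∑ i, ‖c i‖ * ‖u i - v i‖ := (norm_sum_le _ _).trans_eq (by simp only [norm_smul])
    _ ≤ ∑ _i : ι, ‖x‖ * δ :=
        Finset.sum_le_sum fun i _ => mul_le_mul (hc i) (hu i) (norm_nonneg _) (norm_nonneg _)
    _ = Fintype.card ι * δ * ‖x‖ := by
        rw [Finset.sum_const, Finset.card_univ, nsmul_eq_mul]; ring

lemma Orthonormal.linearIndependent_of_near {v u : ι → E} (hv : Orthonormal 𝕜 v) {δ : ℝ}
    (hu : ∀ i, ‖u i - v i‖ ≤ δ) (hδ : Fintype.card ι * δ < 1) : LinearIndependent 𝕜 u := by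
  rw [Fintype.linearIndependent_iff]
  intro c hc
  have hx : ∑ i, c i • v i = 0 := by
    have := hv.norm_sum_smul_sub_le hu c
    rw [hc, zero_sub, norm_neg] at this
    exact norm_le_zero_iff.1 (by nlinarith [norm_nonneg (∑ i, c i • v i)])
  exact Fintype.linearIndependent_iff.1 hv.linearIndependent c hx

lemma Submodule.exists_le_finrank_eq_near_of_dense {D : Submodule 𝕜 E} (hD : Dense (D : Set E))
    (V : Submodule 𝕜 E) [FiniteDimensional 𝕜 V] {ε : ℝ} (hε : 0 < ε) :
    ∃ W ≤ D, Module.finrank 𝕜 W = Module.finrank 𝕜 V ∧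
      ∀ w ∈ W, ‖w‖ = 1 → ∃ x ∈ V, ‖w - x‖ ≤ ε := by
  set n := Module.finrank 𝕜 V
  set v : Fin n → E := V.subtypeₗᵢ ∘ stdOrthonormalBasis 𝕜 V
  have hv : Orthonormal 𝕜 v := (stdOrthonormalBasis 𝕜 V).orthonormal.comp_linearIsometry _
  -- `n * δ ≤ 1 / 2` keeps the perturbed basis independent, and `2 * n * δ ≤ ε`.
  set δ := min ε 1 / (2 * (n + 1))
  have hδ : 0 < δ := by positivity
  have ha : n * δ ≤ min ε 1 / 2 := by
    rw [mul_div, div_le_div_iff₀ (by positivity) two_pos]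
    nlinarith [min_le_right ε 1, lt_min hε one_pos]
  choose u huD hu using fun i => hD.exists_dist_lt (v i) hδ
  have hu' : ∀ i, ‖u i - v i‖ ≤ δ := fun i => by rw [← dist_eq_norm, dist_comm]; exact (hu i).le
  refine ⟨Submodule.span 𝕜 (Set.range u), Submodule.span_le.2 (Set.range_subset_iff.2 huD), ?_, ?_⟩
  · rw [finrank_span_eq_card (hv.linearIndependent_of_near hu' ?_), Fintype.card_fin]
    simp only [Fintype.card_fin]
    linarith [min_le_right ε 1]
  · rintro w hw hw1
    obtain ⟨c, rfl⟩ := (Submodule.mem_span_range_iff_exists_fun 𝕜).1 hw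
    refine ⟨∑ i, c i • v i, V.sum_mem fun i _ => V.smul_mem _ (Subtype.prop _), ?_⟩
    set d := ‖∑ i, c i • u i - ∑ i, c i • v i‖
    have hnear : d ≤ n * δ * ‖∑ i, c i • v i‖ := by
      simpa only [Fintype.card_fin] using hv.norm_sum_smul_sub_le hu' c
    have hx : ‖∑ i, c i • v i‖ ≤ 1 + d := by
      rw [← hw1]; exact norm_le_norm_add_norm_sub _ _
    have : d ≤ n * δ * (1 + d) := hnear.trans (by gcongr)
    nlinarith [min_le_right ε 1, min_le_left ε 1]

end Perturbation

section Rayleigh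

variable {H : Type*} [NormedAddCommGroup H] [InnerProductSpace ℂ H] (B : H →L[ℂ] H)

lemma abs_re_inner_le_of_norm_eq_one {x : H} (hx : ‖x‖ = 1) : |(inner ℂ (B x) x).re| ≤ ‖B‖ := by
  have := B.rayleighQuotient_le_norm x
  rwa [ContinuousLinearMap.rayleighQuotient, hx, one_pow, div_one,
    B.reApplyInnerSelf_apply] at this

lemma re_inner_le_rayleighSup {V : Submodule ℂ H} {x : H} (hxV : x ∈ V) (hx : ‖x‖ = 1) :
    (inner ℂ (B x) x).re ≤ rayleighSup B V := by
  refine le_csSup ⟨‖B‖, ?_⟩ ⟨x, ⟨hxV, hx⟩, rfl⟩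
  rintro _ ⟨z, ⟨-, hz⟩, rfl⟩
  exact (abs_le.1 (abs_re_inner_le_of_norm_eq_one B hz)).2

lemma abs_rayleighSup_le (V : Submodule ℂ H) : |rayleighSup B V| ≤ ‖B‖ := by
  refine abs_le.2 ⟨?_, Real.sSup_le ?_ (norm_nonneg B)⟩
  · rcases Set.eq_empty_or_nonempty {x | x ∈ V ∧ ‖x‖ = 1} with hempty | ⟨x, hxV, hx⟩
    · rw [rayleighSup, hempty, Set.image_empty, Real.sSup_empty, neg_nonpos]
      exact norm_nonneg B
    · exact (abs_le.1 (abs_re_inner_le_of_norm_eq_one B hx)).1.trans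
        (re_inner_le_rayleighSup B hxV hx)
  · rintro _ ⟨x, ⟨-, hx⟩, rfl⟩
    exact (abs_le.1 (abs_re_inner_le_of_norm_eq_one B hx)).2

lemma neg_norm_le_rayleighSup (V : Submodule ℂ H) : -‖B‖ ≤ rayleighSup B V :=
  (abs_le.1 (abs_rayleighSup_le B V)).1

lemma re_inner_le_rayleighSup_mul_norm_sq {V : Submodule ℂ H} {x : H} (hx : x ∈ V) :
    (inner ℂ (B x) x).re ≤ rayleighSup B V * ‖x‖ ^ 2 := by
  rcases eq_or_ne x 0 with rfl | hx0
  · simp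
  have hnorm : ‖x‖ ≠ 0 := norm_ne_zero_iff.2 hx0
  set y := ((‖x‖⁻¹ : ℝ) : ℂ) • x
  have hy : ‖y‖ = 1 := by simp [y, norm_smul, hnorm]
  have hyx : (inner ℂ (B y) y).re = ‖x‖⁻¹ ^ 2 * (inner ℂ (B x) x).re := by
    have := B.reApplyInnerSelf_smul x (c := ((‖x‖⁻¹ : ℝ) : ℂ))
    rwa [B.reApplyInnerSelf_apply, B.reApplyInnerSelf_apply, Complex.norm_real, norm_inv,
      norm_norm] at this
  have hle := re_inner_le_rayleighSup B (V.smul_mem _ hx) hy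
  rw [hyx, inv_pow, inv_mul_le_iff₀ (by positivity)] at hle
  linarith

lemma re_inner_sub_re_inner_le (w x : H) :
    (inner ℂ (B w) w).re - (inner ℂ (B x) x).re ≤ ‖B‖ * ‖w - x‖ * (‖w‖ + ‖x‖) := by
  have hsplit : inner ℂ (B w) w - inner ℂ (B x) x =
      inner ℂ (B (w - x)) w + inner ℂ (B x) (w - x) := by
    rw [map_sub, inner_sub_left, inner_sub_right]; ring
  calc (inner ℂ (B w) w).re - (inner ℂ (B x) x).re
      = (inner ℂ (B (w - x)) w + inner ℂ (B x) (w - x)).re := by rw [← hsplit, Complex.sub_re]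
    _ ≤ ‖inner ℂ (B (w - x)) w‖ + ‖inner ℂ (B x) (w - x)‖ :=
        (Complex.re_le_norm _).trans (norm_add_le _ _)
    _ ≤ ‖B (w - x)‖ * ‖w‖ + ‖B x‖ * ‖w - x‖ := by gcongr <;> exact norm_inner_le_norm _ _
    _ ≤ ‖B‖ * ‖w - x‖ * ‖w‖ + ‖B‖ * ‖x‖ * ‖w - x‖ := by gcongr <;> exact B.le_opNorm _
    _ = ‖B‖ * ‖w - x‖ * (‖w‖ + ‖x‖) := by ring

lemma rayleighSup_le_add_of_near {V W : Submodule ℂ H} (hW : W ≠ ⊥) {a : ℝ} (ha : a ≤ 1)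
    (hnear : ∀ w ∈ W, ‖w‖ = 1 → ∃ x ∈ V, ‖w - x‖ ≤ a) :
    rayleighSup B W ≤ rayleighSup B V + 6 * a * ‖B‖ := by
  have := Submodule.nontrivial_iff_ne_bot.2 hW
  obtain ⟨w₀, hw₀⟩ := exists_norm_eq W zero_le_one
  refine csSup_le ⟨_, ⟨w₀, ⟨w₀.2, hw₀⟩, rfl⟩⟩ ?_
  rintro _ ⟨w, ⟨hwW, hw⟩, rfl⟩
  obtain ⟨x, hxV, hwx⟩ := hnear w hwW hw
  have hx1 : |‖x‖ - 1| ≤ a := by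
    rw [← hw, abs_sub_comm]; exact (abs_norm_sub_norm_le w x).trans hwx
  have hB := norm_nonneg B
  have ha0 : 0 ≤ a := (norm_nonneg _).trans hwx
  have hquad : rayleighSup B V * (‖x‖ ^ 2 - 1) ≤ ‖B‖ * (a * (2 + a)) := by
    have : |‖x‖ ^ 2 - 1| ≤ a * (2 + a) := by
      rw [show ‖x‖ ^ 2 - 1 = (‖x‖ - 1) * (‖x‖ - 1 + 2) by ring, abs_mul]
      gcongr
      exact (abs_add_le _ _).trans (by rw [abs_two]; linarith)
    calc rayleighSup B V * (‖x‖ ^ 2 - 1) ≤ |rayleighSup B V| * |‖x‖ ^ 2 - 1| := by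
          rw [← abs_mul]; exact le_abs_self _
      _ ≤ ‖B‖ * (a * (2 + a)) := by gcongr; exact abs_rayleighSup_le B V
  have hdiff : (inner ℂ (B w) w).re - (inner ℂ (B x) x).re ≤ ‖B‖ * (a * (2 + a)) := by
    refine (re_inner_sub_re_inner_le B w x).trans ?_
    rw [mul_assoc]
    exact mul_le_mul_of_nonneg_left
      (mul_le_mul hwx (by linarith [abs_le.1 hx1]) (by positivity) ha0) hB
  have hx := re_inner_le_rayleighSup_mul_norm_sq B hxV
  have ha2 : ‖B‖ * (a * (2 + a)) ≤ 3 * a * ‖B‖ := by nlinarith [mul_nonneg hB ha0]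
  show (inner ℂ (B w) w).re ≤ _
  linarith

end Rayleigh

section FiniteSection

variable {H : Type*} [NormedAddCommGroup H] [InnerProductSpace ℂ H] {e : ℕ → H}

lemma spanFin_mono_s9 (e : ℕ → H) : Monotone (spanFin e) := fun _ _ hmn =>
  Submodule.span_mono <| Set.range_subset_iff.2 fun i => ⟨Fin.castLE hmn i, rfl⟩

lemma iSup_spanFin (e : ℕ → H) : ⨆ n, spanFin e n = Submodule.span ℂ (Set.range e) := by
  refine le_antisymm (iSup_le fun n => Submodule.span_mono ?_) (Submodule.span_le.2 ?_)
  · exact Set.range_subset_iff.2 fun i => ⟨i, rfl⟩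
  · rintro _ ⟨k, rfl⟩
    exact Submodule.mem_iSup_of_mem (k + 1) (Submodule.subset_span ⟨Fin.last k, rfl⟩)

lemma exists_le_spanFin_of_fg {W : Submodule ℂ H} (hW : W.FG)
    (hle : W ≤ Submodule.span ℂ (Set.range e)) : ∃ N, W ≤ spanFin e N := by
  rw [← iSup_spanFin, iSup] at hle
  obtain ⟨_, ⟨N, rfl⟩, hN⟩ :=
    (CompleteLattice.isCompactElement_iff_le_of_directed_sSup_le (α := Submodule ℂ H) W).1
      ((Submodule.fg_iff_compact W).1 hW) _ (Set.range_nonempty _)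
      (spanFin_mono_s9 e).directed_le.directedOn_range hle
  exact ⟨N, hN⟩

lemma finrank_spanFin (he : Orthonormal ℂ e) (n : ℕ) : Module.finrank ℂ (spanFin e n) = n :=
  (finrank_span_eq_card (he.comp _ Fin.val_injective).linearIndependent).trans (Fintype.card_fin n)

variable (B : H →L[ℂ] H) {j : ℕ}

lemma minMaxValFS_le_rayleighSup {n : ℕ} {W : Submodule ℂ H} (hW : W ≤ spanFin e n)
    (hWj : Module.finrank ℂ W = j) : minMaxValFS e B j n ≤ rayleighSup B W :=
  csInf_le ⟨-‖B‖, by rintro _ ⟨V, -, -, rfl⟩; exact neg_norm_le_rayleighSup B V⟩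
    ⟨W, hW, hWj, rfl⟩

lemma minMaxValFS_anti (he : Orthonormal ℂ e) {m n : ℕ} (hjm : j ≤ m) (hmn : m ≤ n) :
    minMaxValFS e B j n ≤ minMaxValFS e B j m :=
  csInf_le_csInf ⟨-‖B‖, by rintro _ ⟨V, -, -, rfl⟩; exact neg_norm_le_rayleighSup B V⟩
    ⟨_, spanFin e j, spanFin_mono_s9 e hjm, finrank_spanFin he j, rfl⟩
    fun _ ⟨V, hV, hVj, ht⟩ => ⟨V, hV.trans (spanFin_mono_s9 e hmn), hVj, ht⟩

lemma minMaxVal_le_minMaxValFS (he : Orthonormal ℂ e) {n : ℕ} (hjn : j ≤ n) :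
    minMaxVal B j ≤ minMaxValFS e B j n :=
  csInf_le_csInf ⟨-‖B‖, by rintro _ ⟨V, -, rfl⟩; exact neg_norm_le_rayleighSup B V⟩
    ⟨_, spanFin e j, spanFin_mono_s9 e hjn, finrank_spanFin he j, rfl⟩
    fun _ ⟨V, _, hVj, ht⟩ => ⟨V, hVj, ht⟩

lemma exists_rayleighSup_lt_of_minMaxVal_lt (he : Orthonormal ℂ e) {a : ℝ}
    (ha : minMaxVal B j < a) :
    ∃ V : Submodule ℂ H, Module.finrank ℂ V = j ∧ rayleighSup B V < a := by
  obtain ⟨_, ⟨V, hVj, rfl⟩, hVa⟩ :=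
    exists_lt_of_csInf_lt (by exact ⟨_, spanFin e j, finrank_spanFin he j, rfl⟩) ha
  exact ⟨V, hVj, hVa⟩

lemma eventually_minMaxValFS_le
    (hdense : (Submodule.span ℂ (Set.range e)).topologicalClosure = ⊤)
    {V : Submodule ℂ H} [FiniteDimensional ℂ V] (hVj : Module.finrank ℂ V = j) (hj : 1 ≤ j)
    {ε : ℝ} (hε : 0 < ε) : ∀ᶠ n in atTop, minMaxValFS e B j n ≤ rayleighSup B V + ε := by
  set a := min 1 (ε / (6 * (‖B‖ + 1)))
  have ha : 6 * a * ‖B‖ ≤ ε := by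
    have : a * (6 * (‖B‖ + 1)) ≤ ε := (le_div_iff₀ (by positivity)).1 (min_le_right _ _)
    nlinarith [norm_nonneg B]
  obtain ⟨W, hWD, hWj, hnear⟩ := Submodule.exists_le_finrank_eq_near_of_dense
    (Submodule.dense_iff_topologicalClosure_eq_top.2 hdense) V
    (show 0 < a from lt_min one_pos (by positivity))
  have : FiniteDimensional ℂ W := Module.finite_of_finrank_pos (by omega)
  have hW : W ≠ ⊥ := fun h => by rw [h, finrank_bot] at hWj; omega
  obtain ⟨N, hN⟩ := exists_le_spanFin_of_fg (W.fg_iff_finiteDimensional.2 this) hWD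
  filter_upwards [eventually_ge_atTop N] with n hn
  calc minMaxValFS e B j n ≤ rayleighSup B W :=
        minMaxValFS_le_rayleighSup B (hN.trans (spanFin_mono_s9 e hn)) (hWj.trans hVj)
    _ ≤ rayleighSup B V + 6 * a * ‖B‖ := rayleighSup_le_add_of_near B hW (min_le_left _ _) hnear
    _ ≤ rayleighSup B V + ε := by linarith

end FiniteSection

theorem minmax_finite_section_general
    {H : Type*} [NormedAddCommGroup H] [InnerProductSpace ℂ H]
    (e : ℕ → H) (he : Orthonormal ℂ e)
    (hdense : (Submodule.span ℂ (Set.range e)).topologicalClosure = ⊤)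
    (B : H →L[ℂ] H) (j : ℕ) (hj : 1 ≤ j) :
    (∀ n : ℕ, j ≤ n →
      minMaxVal B j ≤ minMaxValFS e B j (n + 1) ∧
        minMaxValFS e B j (n + 1) ≤ minMaxValFS e B j n) ∧
      Tendsto (fun n : ℕ => minMaxValFS e B j n) atTop (𝓝 (minMaxVal B j)) := by
  refine ⟨fun n hjn => ⟨minMaxVal_le_minMaxValFS B he (hjn.trans n.le_succ),
    minMaxValFS_anti B he hjn n.le_succ⟩, tendsto_order.2 ⟨fun a ha => ?_, fun a ha => ?_⟩⟩
  · filter_upwards [eventually_ge_atTop j] with n hjn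
    exact ha.trans_le (minMaxVal_le_minMaxValFS B he hjn)
  · obtain ⟨V, hVj, hVa⟩ := exists_rayleighSup_lt_of_minMaxVal_lt B he ha
    have : FiniteDimensional ℂ V := Module.finite_of_finrank_pos (by omega)
    filter_upwards [eventually_minMaxValFS_le B hdense hVj hj (half_pos (sub_pos.2 hVa))] with n hn
    linarith

/-- For a bounded self-adjoint operator `B` and `j ≥ 1`, `n ≥ j`:
(i) `λ_j(B) ≤ μ_j^{n+1}(B) ≤ μ_j^n(B)`; (ii) `μ_j^n(B) → λ_j(B)` as `n → ∞`. -/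
theorem minmax_finite_section
    {H : Type*} [NormedAddCommGroup H] [InnerProductSpace ℂ H] [CompleteSpace H]
    (e : ℕ → H) (he : Orthonormal ℂ e)
    (hdense : (Submodule.span ℂ (Set.range e)).topologicalClosure = ⊤)
    (B : H →L[ℂ] H) (hB : IsSelfAdjoint B) (j : ℕ) (hj : 1 ≤ j) :
    (∀ n : ℕ, j ≤ n →
      minMaxVal B j ≤ minMaxValFS e B j (n + 1) ∧
        minMaxValFS e B j (n + 1) ≤ minMaxValFS e B j n) ∧
      Tendsto (fun n : ℕ => minMaxValFS e B j n) atTop (𝓝 (minMaxVal B j)) :=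
  minmax_finite_section_general e he hdense B j hj
end

section
/- Let A be a bounded normal operator (A*A = AA*) on a complex Hilbert space H, let z be an isolated point of Sp(A) with Sp(A) ≠ {z}, let z' ∈ ℂ and η ≥ 0, and let x ∈ H with ‖x‖ = 1 and ‖(A − z'I)x‖ ≤ η. Write x = u + y, where u is the orthogonal projection of x onto ker(A − zI) and y is orthogonal to ker(A − zI). Then ‖y‖ ≤ (|z − z'| + η) / dist(z, Sp(A) \ {z}). -/
/-!
For normal `A`, apply the continuous functional calculus to `w ↦ (w - z)⁻¹`. Because `z` is
isolated in `Sp(A)`, this function (which is `0` at `z`, by `0⁻¹ = 0`) is continuous on the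
spectrum, so it yields an operator `B` with `‖B‖ ≤ 1 / dist(z, Sp(A) \ {z})`, and `B (A - z)` is
the self-adjoint function of `A` that is `0` at `z` and `1` elsewhere. Such an operator fixes every
vector orthogonal to `ker (A - z)`, so `‖y‖ = ‖B (A - z) y‖ ≤ ‖(A - z) x‖ / dist(z, Sp(A) \ {z})`,
and `‖(A - z) x‖ ≤ |z - z'| + η`.
-/

open Metric

section IsolatedPoint

variable {X : Type*} [PseudoMetricSpace X] {s : Set X} {z : X} {ρ : ℝ}

lemma not_accPt_of_inter_ball_eq_singleton (hρ : 0 < ρ) (hs : s ∩ ball z ρ = {z}) :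
    ¬AccPt z (Filter.principal s) := by
  rw [accPt_iff_nhds]
  intro h
  obtain ⟨w, hw, hwz⟩ := h _ (ball_mem_nhds z hρ)
  rw [Set.inter_comm, hs] at hw
  exact hwz hw

lemma le_infDist_sdiff_singleton (hs : s ∩ ball z ρ = {z}) (hne : (s \ {z}).Nonempty) :
    ρ ≤ infDist z (s \ {z}) := by
  refine (le_infDist hne).2 fun w ⟨hws, hwz⟩ ↦ ?_
  rw [dist_comm, ← not_lt, ← mem_ball]
  exact fun hwb ↦ hwz (hs ▸ ⟨hws, hwb⟩)

end IsolatedPoint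

section InvSub

variable {𝕜 : Type*} [NormedField 𝕜] {s : Set 𝕜} {z : 𝕜} {ρ : ℝ}

lemma continuousOn_inv_sub (hρ : 0 < ρ) (hs : s ∩ ball z ρ = {z}) :
    ContinuousOn (fun w ↦ (w - z)⁻¹) s := by
  intro w hw
  rcases eq_or_ne w z with rfl | hwz
  · exact continuousWithinAt_of_not_accPt (not_accPt_of_inter_ball_eq_singleton hρ hs)
  · exact (continuousAt_id.sub continuousAt_const |>.inv₀ (sub_ne_zero.2 hwz)).continuousWithinAt

lemma norm_inv_sub_le_inv_infDist (hρ : 0 < ρ) (hs : s ∩ ball z ρ = {z}) {w : 𝕜} (hw : w ∈ s) :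
    ‖(w - z)⁻¹‖ ≤ (infDist z (s \ {z}))⁻¹ := by
  rcases eq_or_ne w z with rfl | hwz
  · simpa using infDist_nonneg
  have hw' : w ∈ s \ {z} := ⟨hw, hwz⟩
  have hpos : 0 < infDist z (s \ {z}) := hρ.trans_le (le_infDist_sdiff_singleton hs ⟨w, hw'⟩)
  rw [norm_inv, ← dist_eq_norm, dist_comm]
  exact inv_anti₀ hpos (infDist_le_dist_of_mem hw')

end InvSub

section ReducedResolvent

variable {𝒜 : Type*} [CStarAlgebra 𝒜] (a : 𝒜) (z : ℂ)

lemma sub_smul_one_eq_cfc [IsStarNormal a] : a - z • (1 : 𝒜) = cfc (· - z) a := by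
  rw [cfc_sub (fun w : ℂ ↦ w) (fun _ ↦ z) a, cfc_id' ℂ a, cfc_const z a,
    Algebra.algebraMap_eq_smul_one]

lemma isSelfAdjoint_cfc_inv_sub_mul_sub :
    IsSelfAdjoint (cfc (fun w ↦ (w - z)⁻¹ * (w - z)) a) := by
  rw [IsSelfAdjoint, ← cfc_star]
  refine cfc_congr fun w _ ↦ ?_
  rcases eq_or_ne w z with rfl | hwz
  · simp
  · simp [sub_ne_zero.2 hwz]

variable {a z} {ρ : ℝ} (hρ : 0 < ρ) (hiso : spectrum ℂ a ∩ ball z ρ = {z})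
include hρ hiso

section Normal

variable [IsStarNormal a]

lemma cfc_inv_sub_mul_sub_smul_one :
    cfc (fun w ↦ (w - z)⁻¹) a * (a - z • 1) = cfc (fun w ↦ (w - z)⁻¹ * (w - z)) a := by
  rw [sub_smul_one_eq_cfc, ← cfc_mul _ _ a (continuousOn_inv_sub hρ hiso)]

lemma sub_smul_one_mul_cfc_inv_sub_mul_sub :
    (a - z • 1) * cfc (fun w ↦ (w - z)⁻¹ * (w - z)) a = a - z • 1 := by
  rw [sub_smul_one_eq_cfc, ← cfc_mul (· - z) (fun w ↦ (w - z)⁻¹ * (w - z)) a (by fun_prop)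
    ((continuousOn_inv_sub hρ hiso).mul (by fun_prop))]
  refine cfc_congr fun w _ ↦ ?_
  rcases eq_or_ne w z with rfl | hwz
  · simp
  · simp [sub_ne_zero.2 hwz]

end Normal

lemma norm_cfc_inv_sub_le : ‖cfc (fun w ↦ (w - z)⁻¹) a‖ ≤ (infDist z (spectrum ℂ a \ {z}))⁻¹ :=
  norm_cfc_le (inv_nonneg.2 infDist_nonneg) fun _ hw ↦ norm_inv_sub_le_inv_infDist hρ hiso hw

end ReducedResolvent

theorem LinearMap.apply_apply_eq_self_of_mem_ker_orthogonal {𝕜 E : Type*} [RCLike 𝕜]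
    [NormedAddCommGroup E] [InnerProductSpace 𝕜 E] {T B : E →ₗ[𝕜] E} (hBT : (B ∘ₗ T).IsSymmetric)
    (hTBT : T ∘ₗ B ∘ₗ T = T) {y : E} (hy : y ∈ (LinearMap.ker T)ᗮ) : B (T y) = y := by
  have hker : B (T y) - y ∈ LinearMap.ker T := by
    rw [LinearMap.mem_ker, map_sub, sub_eq_zero]
    exact LinearMap.congr_fun hTBT y
  have horth : B (T y) - y ∈ (LinearMap.ker T)ᗮ := by
    refine Submodule.sub_mem _ (fun v hv ↦ ?_) hy
    rw [← LinearMap.comp_apply, ← hBT, LinearMap.comp_apply, LinearMap.mem_ker.1 hv, map_zero,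
      inner_zero_left]
  exact sub_eq_zero.1 (Submodule.disjoint_def.1 (Submodule.orthogonal_disjoint _) _ hker horth)

lemma ContinuousLinearMap.norm_sub_smul_one_apply_le {𝕜 E : Type*} [NontriviallyNormedField 𝕜]
    [SeminormedAddCommGroup E] [NormedSpace 𝕜 E] (A : E →L[𝕜] E) (z z' : 𝕜) (x : E) :
    ‖(A - z • 1) x‖ ≤ ‖(A - z' • 1) x‖ + ‖z - z'‖ * ‖x‖ := by
  have h : (A - z • 1) x = (A - z' • 1) x + (z' - z) • x := by
    simp only [sub_apply, smul_apply, one_apply_eq_self, sub_smul]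
    abel
  rw [h, norm_sub_rev, ← norm_smul]
  exact norm_add_le _ _

theorem norm_le_norm_sub_smul_one_apply_div_infDist {H : Type*} [NormedAddCommGroup H]
    [InnerProductSpace ℂ H] [CompleteSpace H] {A : H →L[ℂ] H} [IsStarNormal A] {z : ℂ} {ρ : ℝ}
    (hρ : 0 < ρ) (hiso : spectrum ℂ A ∩ ball z ρ = {z}) {y : H}
    (hy : y ∈ (LinearMap.ker ((A - z • 1 : H →L[ℂ] H) : H →ₗ[ℂ] H))ᗮ) :
    ‖y‖ ≤ ‖(A - z • 1) y‖ / infDist z (spectrum ℂ A \ {z}) := by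
  set B := cfc (fun w ↦ (w - z)⁻¹) A
  have hBT : IsSelfAdjoint (B * (A - z • 1)) := by
    rw [cfc_inv_sub_mul_sub_smul_one hρ hiso]
    exact isSelfAdjoint_cfc_inv_sub_mul_sub A z
  have hTBT : (A - z • 1) * (B * (A - z • 1)) = A - z • 1 := by
    rw [cfc_inv_sub_mul_sub_smul_one hρ hiso, sub_smul_one_mul_cfc_inv_sub_mul_sub hρ hiso]
  have hBTy : B ((A - z • 1) y) = y := LinearMap.apply_apply_eq_self_of_mem_ker_orthogonal
    hBT.isSymmetric (congrArg ContinuousLinearMap.toLinearMap hTBT) hy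
  calc ‖y‖ = ‖B ((A - z • 1) y)‖ := by rw [hBTy]
    _ ≤ ‖B‖ * ‖(A - z • 1) y‖ := B.le_opNorm _
    _ ≤ (infDist z (spectrum ℂ A \ {z}))⁻¹ * ‖(A - z • 1) y‖ := by
      gcongr
      exact norm_cfc_inv_sub_le hρ hiso
    _ = _ := inv_mul_eq_div _ _

theorem approx_eigenvector_orthogonal_component_bound_general
    {H : Type*} [NormedAddCommGroup H] [InnerProductSpace ℂ H] [CompleteSpace H]
    (A : H →L[ℂ] H)
    (hA : (ContinuousLinearMap.adjoint A) * A = A * (ContinuousLinearMap.adjoint A))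
    (z : ℂ) (hiso : ∃ ρ > (0 : ℝ), spectrum ℂ A ∩ Metric.ball z ρ = {z})
    (z' : ℂ) (η : ℝ) (x u y : H)
    (hx : ‖x‖ = 1) (hres : ‖(A - z' • (1 : H →L[ℂ] H)) x‖ ≤ η)
    (hdecomp : x = u + y) (hu : u ∈ LinearMap.ker ((A - z • (1 : H →L[ℂ] H) : H →L[ℂ] H) : H →ₗ[ℂ] H))
    (hy : y ∈ (LinearMap.ker ((A - z • (1 : H →L[ℂ] H) : H →L[ℂ] H) : H →ₗ[ℂ] H))ᗮ) :
    ‖y‖ ≤ (‖z - z'‖ + η) / Metric.infDist z (spectrum ℂ A \ {z}) := by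
  have : IsStarNormal A := ⟨hA⟩
  obtain ⟨ρ, hρ, hball⟩ := hiso
  have hu' : (A - z • 1) u = 0 := hu
  have hTy : ‖(A - z • 1) y‖ ≤ ‖z - z'‖ + η :=
    calc ‖(A - z • 1) y‖ = ‖(A - z • 1) x‖ := by rw [hdecomp, map_add, hu', zero_add]
      _ ≤ ‖(A - z' • 1) x‖ + ‖z - z'‖ * ‖x‖ := A.norm_sub_smul_one_apply_le z z' x
      _ ≤ ‖z - z'‖ + η := by rw [hx, mul_one, add_comm]; gcongr
  calc ‖y‖ ≤ ‖(A - z • 1) y‖ / infDist z (spectrum ℂ A \ {z}) :=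
        norm_le_norm_sub_smul_one_apply_div_infDist hρ hball hy
    _ ≤ _ := div_le_div_of_nonneg_right hTy infDist_nonneg

/-- Let `A` be a bounded normal operator, `z` an isolated point of
`Sp(A)` with `Sp(A) ≠ {z}`, and let `x = u + y` with `‖x‖ = 1`, `‖(A - z'I)x‖ ≤ η`,
`u ∈ ker(A - zI)` and `y ⊥ ker(A - zI)`. Then
`‖y‖ ≤ (|z - z'| + η) / dist(z, Sp(A) \ {z})`. -/
theorem approx_eigenvector_orthogonal_component_bound
    {H : Type*} [NormedAddCommGroup H] [InnerProductSpace ℂ H] [CompleteSpace H]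
    (A : H →L[ℂ] H)
    (hA : (ContinuousLinearMap.adjoint A) * A = A * (ContinuousLinearMap.adjoint A))
    (z : ℂ) (hiso : ∃ ρ > (0 : ℝ), spectrum ℂ A ∩ Metric.ball z ρ = {z})
    (hne : spectrum ℂ A ≠ {z})
    (z' : ℂ) (η : ℝ) (hη : 0 ≤ η) (x u y : H)
    (hx : ‖x‖ = 1) (hres : ‖(A - z' • (1 : H →L[ℂ] H)) x‖ ≤ η)
    (hdecomp : x = u + y) (hu : u ∈ LinearMap.ker ((A - z • (1 : H →L[ℂ] H) : H →L[ℂ] H) : H →ₗ[ℂ] H))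
    (hy : y ∈ (LinearMap.ker ((A - z • (1 : H →L[ℂ] H) : H →L[ℂ] H) : H →ₗ[ℂ] H))ᗮ) :
    ‖y‖ ≤ (‖z - z'‖ + η) / Metric.infDist z (spectrum ℂ A \ {z}) :=
  approx_eigenvector_orthogonal_component_bound_general A hA z hiso z' η x u y hx hres hdecomp hu hy
end
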